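/- arXiv:1211.2713 — 2 statements merged into one kernel-verified Lean document; each statement's English description precedes it below -/
import Mathlib

section
/- Let A be a real n × d matrix, A' a real n' × d matrix, and t > 0 a real number such that A'ᵀA' ⪯ t · AᵀA in the Loewner order. Let P be a Moore–Penrose pseudoinverse of AᵀA and P' a Moore–Penrose pseudoinverse of A'ᵀA'. Then every row a' of A' (viewed as a 1 × d row vector) satisfies a' P a'ᵀ ≤ t · (a' P' a'ᵀ). -/
/-!
Write `M = AᵀA`, `M' = A'ᵀA'` and let `x` be a row of `A'`. Since `x` lies in the range of `M'`,
`x = M' w` for `w = P' x`. With `u = P x` one has `uᵀMu = xᵀPx = s`, hence `uᵀM'u ≤ t s`,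
and `uᵀM'w = uᵀx = s`. Positivity of `M'` at `u - t w` then gives
`0 ≤ t s - 2 t s + t² xᵀP'x`, i.e. `s ≤ t · xᵀP'x`.
-/

open Matrix BigOperators

/-- `P` is a Moore–Penrose pseudoinverse of `M`. -/
def IsMoorePenrose {d : ℕ} (M P : Matrix (Fin d) (Fin d) ℝ) : Prop :=
  M * P * M = M ∧ P * M * P = P ∧ (M * P)ᵀ = M * P ∧ (P * M)ᵀ = P * M

namespace IsMoorePenrose

variable {d : ℕ} {M P Q : Matrix (Fin d) (Fin d) ℝ}

theorem transpose (h : IsMoorePenrose M P) : IsMoorePenrose Mᵀ Pᵀ := by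
  obtain ⟨h₁, h₂, h₃, h₄⟩ := h
  refine ⟨?_, ?_, ?_, ?_⟩
  · rw [← transpose_mul, ← transpose_mul, ← Matrix.mul_assoc, h₁]
  · rw [← transpose_mul, ← transpose_mul, ← Matrix.mul_assoc, h₂]
  · rw [← transpose_mul, transpose_transpose, h₄]
  · rw [← transpose_mul, transpose_transpose, h₃]

theorem unique (hP : IsMoorePenrose M P) (hQ : IsMoorePenrose M Q) : P = Q := by
  obtain ⟨p₁, p₂, p₃, p₄⟩ := hP
  obtain ⟨q₁, q₂, q₃, q₄⟩ := hQ
  have hMP : M * P = M * Q := by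
    calc M * P = (M * Q * M * P)ᵀ := by rw [q₁, p₃]
    _ = (M * P)ᵀ * (M * Q)ᵀ := by rw [← transpose_mul]; noncomm_ring
    _ = M * Q := by rw [p₃, q₃, ← Matrix.mul_assoc, p₁]
  have hPM : P * M = Q * M := by
    calc P * M = (P * (M * Q * M))ᵀ := by rw [q₁, p₄]
    _ = (Q * M)ᵀ * (P * M)ᵀ := by rw [← transpose_mul]; noncomm_ring
    _ = Q * M := by rw [p₄, q₄, Matrix.mul_assoc, ← Matrix.mul_assoc M, p₁]
  calc P = P * (M * P) := by rw [← Matrix.mul_assoc, p₂]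
  _ = Q * M * Q := by rw [hMP, ← Matrix.mul_assoc, hPM]
  _ = Q := q₂

theorem transpose_eq_self (hM : Mᵀ = M) (h : IsMoorePenrose M P) : Pᵀ = P :=
  (hM ▸ h.transpose).unique h

theorem transpose_eq_self_of_gram {m : ℕ} {B : Matrix (Fin m) (Fin d) ℝ}
    (h : IsMoorePenrose (Bᵀ * B) P) : Pᵀ = P :=
  h.transpose_eq_self (by rw [transpose_mul, transpose_transpose])

end IsMoorePenrose

theorem Matrix.mul_eq_self_of_transpose_mul_self_mul_eq {m n : Type*} [Fintype m] [Fintype n]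
    (B : Matrix m n ℝ) {Q : Matrix n n ℝ} (h : Bᵀ * B * Q = Bᵀ * B) : B * Q = B := by
  classical
  have h' : Bᴴ * B * (Q - 1) = 0 := by
    rw [conjTranspose_eq_transpose_of_trivial, Matrix.mul_sub, h, Matrix.mul_one, sub_self]
  rwa [conjTranspose_mul_self_mul_eq_zero, Matrix.mul_sub, Matrix.mul_one, sub_eq_zero] at h'

theorem IsMoorePenrose.gram_mulVec_mulVec_row {m d : ℕ} {B : Matrix (Fin m) (Fin d) ℝ}
    {P : Matrix (Fin d) (Fin d) ℝ} (h : IsMoorePenrose (Bᵀ * B) P) (i : Fin m) :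
    (Bᵀ * B) *ᵥ (P *ᵥ B i) = B i := by
  have hrows : B * (P * (Bᵀ * B)) = B :=
    B.mul_eq_self_of_transpose_mul_self_mul_eq (by rw [← Matrix.mul_assoc, h.1])
  calc (Bᵀ * B) *ᵥ (P *ᵥ B i) = B i ᵥ* (P * (Bᵀ * B)) := by
        rw [mulVec_mulVec, ← vecMul_transpose, transpose_mul, h.transpose_eq_self_of_gram,
          transpose_mul, transpose_transpose]
  _ = B i := by rw [← mul_apply_eq_vecMul, hrows]

theorem dotProduct_mulVec_mulVec_of_mul_mul_eq {n : Type*} [Fintype n] {M P : Matrix n n ℝ}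
    (hP : Pᵀ = P) (h : P * M * P = P) (x : n → ℝ) :
    (P *ᵥ x) ⬝ᵥ (M *ᵥ (P *ᵥ x)) = x ⬝ᵥ (P *ᵥ x) := by
  rw [dotProduct_comm, dotProduct_mulVec, ← mulVec_transpose, hP, mulVec_mulVec, mulVec_mulVec, h,
    dotProduct_comm]

theorem dotProduct_le_mul_dotProduct_of_posSemidef {n : Type*} [Fintype n] {M M' : Matrix n n ℝ}
    {t : ℝ} (ht : 0 < t) (hM' : M'.PosSemidef) (hle : (t • M - M').PosSemidef) {x u w : n → ℝ}
    (hu : u ⬝ᵥ (M *ᵥ u) = x ⬝ᵥ u) (hw : M' *ᵥ w = x) :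
    x ⬝ᵥ u ≤ t * (x ⬝ᵥ w) := by
  have huu : u ⬝ᵥ (M' *ᵥ u) ≤ t * (x ⬝ᵥ u) := by
    have := hle.dotProduct_mulVec_nonneg u
    rw [star_trivial, sub_mulVec, dotProduct_sub, smul_mulVec, dotProduct_smul, smul_eq_mul,
      hu] at this
    linarith
  have hwu : w ⬝ᵥ (M' *ᵥ u) = x ⬝ᵥ u := by
    rw [dotProduct_mulVec, ← mulVec_transpose, ← conjTranspose_eq_transpose_of_trivial,
      hM'.isHermitian.eq, hw]
  have hexpand := hM'.dotProduct_mulVec_nonneg (u - t • w)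
  rw [star_trivial, mulVec_sub, mulVec_smul, hw] at hexpand
  simp only [sub_dotProduct, dotProduct_sub, smul_dotProduct, dotProduct_smul, smul_eq_mul,
    hwu, dotProduct_comm u x, dotProduct_comm w x] at hexpand
  have : 0 ≤ t * (t * (x ⬝ᵥ w) - x ⬝ᵥ u) := by linarith
  linarith [(mul_nonneg_iff_of_pos_left ht).mp this]

/-- If `A'ᵀA' ⪯ t · AᵀA`, then every row `a'` of `A'` satisfies
`a' (AᵀA)⁺ a'ᵀ ≤ t · a' (A'ᵀA')⁺ a'ᵀ`. -/
theorem stretch_row_bound (n n' d : ℕ) (t : ℝ) (ht : 0 < t)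
    (A : Matrix (Fin n) (Fin d) ℝ) (A' : Matrix (Fin n') (Fin d) ℝ)
    (hle : (t • (Aᵀ * A) - A'ᵀ * A').PosSemidef)
    (P P' : Matrix (Fin d) (Fin d) ℝ)
    (hP : IsMoorePenrose (Aᵀ * A) P) (hP' : IsMoorePenrose (A'ᵀ * A') P') :
    ∀ i : Fin n', A' i ⬝ᵥ P.mulVec (A' i) ≤ t * (A' i ⬝ᵥ P'.mulVec (A' i)) := fun i =>
  dotProduct_le_mul_dotProduct_of_posSemidef ht (posSemidef_conjTranspose_mul_self A') hle
    (dotProduct_mulVec_mulVec_of_mul_mul_eq hP.transpose_eq_self_of_gram hP.2.1 _)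
    (hP'.gram_mulVec_mulVec_row i)
end

section
/- Let 1 ≤ p ≤ p' ≤ 2, let A be a real n × d matrix of rank r, and let Ã be a real ñ × d matrix such that (1/2)·‖A x‖_{p'} ≤ ‖Ã x‖_{p'} ≤ (3/2)·‖A x‖_{p'} for all x ∈ ℝᵈ. Let P̃ be a Moore–Penrose pseudoinverse of ÃᵀÃ, and let C be a real d × r matrix of rank r with (1/2)·P̃ ⪯ C Cᵀ ⪯ (3/2)·P̃ in the Loewner order. Let q be the dual exponent of p (with q = ∞ and the max-norm convention when p = 1). Then U = A C satisfies |||U|||_p ≤ 2√2 · (nd)^{1/p − 1/p'} · (ñd)^{1/p' − 1/2} · d^{1/2} and ‖z‖_q ≤ 3 · ‖U z‖_p for all z ∈ ℝʳ; in particular U is an (α, β, p)-well-conditioned basis for A with αβ ≤ 6√2 · n^{1/p − 1/p'} · ñ^{1/p' − 1/2} · d^{1/p}. -/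
open Matrix BigOperators

/-- The ℓ_p norm of a vector. -/
noncomputable def lpNorm {n : ℕ} (p : ℝ) (v : Fin n → ℝ) : ℝ := (∑ i, |v i| ^ p) ^ (1 / p)

/-- The dual-norm `‖·‖_q` where `1/p + 1/q = 1`; when `p = 1` this is the max-norm. -/
noncomputable def dualNorm {n : ℕ} (p : ℝ) (v : Fin n → ℝ) : ℝ :=
  if p = 1 then ⨆ i, |v i| else lpNorm (p / (p - 1)) v

/-- The entrywise p-norm of a matrix: `(∑ i j, |M i j|^p)^(1/p)`. -/
noncomputable def entryNorm {n m : ℕ} (p : ℝ) (M : Matrix (Fin n) (Fin m) ℝ) : ℝ :=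
  (∑ i, ∑ j, |M i j| ^ p) ^ (1 / p)

/-!
Write `X = Ã C` and `M = ÃᵀÃ`. Since `P̃` is a generalized inverse of the symmetric `M`, the bound
`C Cᵀ ⪰ P̃ / 2` gives `(XᵀX)² = Cᵀ M (C Cᵀ) M C ⪰ Cᵀ M P̃ M C / 2 = XᵀX / 2`. As `X` is injective
(because `rank C = r` and `C Cᵀ ⪯ 3 P̃ / 2`), Cauchy–Schwarz upgrades this to `XᵀX ⪰ 1 / 2`, that is
`‖z‖₂ ≤ √2 ‖X z‖₂`. On the other side `‖X‖_F² = tr (M C Cᵀ) ≤ (3 / 2) tr (M P̃) ≤ 3 d / 2`, since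
`M P̃` is an orthogonal projection. Both bounds pass from `X` to `U = A C` through the
`ℓ_{p'}`-approximation, and the exponents are changed with `‖v‖_q ≤ ‖v‖_p ≤ m ^ (1/p - 1/q) ‖v‖_q`
on `ℝᵐ` for `p ≤ q`.
-/

noncomputable def pNorm {ι : Type*} [Fintype ι] (p : ℝ) (v : ι → ℝ) : ℝ :=
  (∑ i, |v i| ^ p) ^ (1 / p)

lemma lpNorm_eq_pNorm {n : ℕ} (p : ℝ) (v : Fin n → ℝ) : lpNorm p v = pNorm p v := rfl

section pNorm

variable {ι : Type*} [Fintype ι] {p q : ℝ}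

lemma sum_abs_rpow_nonneg (p : ℝ) (v : ι → ℝ) : 0 ≤ ∑ i, |v i| ^ p :=
  Finset.sum_nonneg fun _ _ => by positivity

lemma pNorm_nonneg (p : ℝ) (v : ι → ℝ) : 0 ≤ pNorm p v :=
  Real.rpow_nonneg (sum_abs_rpow_nonneg p v) _

lemma pNorm_rpow (hp : 0 < p) (v : ι → ℝ) : pNorm p v ^ p = ∑ i, |v i| ^ p := by
  rw [pNorm, ← Real.rpow_mul (sum_abs_rpow_nonneg p v), one_div_mul_cancel hp.ne', Real.rpow_one]

lemma pNorm_two (v : ι → ℝ) : pNorm 2 v = √(v ⬝ᵥ v) := by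
  rw [pNorm, Real.sqrt_eq_rpow, dotProduct]
  congr 1
  refine Finset.sum_congr rfl fun i _ => ?_
  rw [Real.rpow_two, sq_abs, sq]

lemma abs_le_pNorm (hp : 0 < p) (v : ι → ℝ) (i : ι) : |v i| ≤ pNorm p v := by
  have hi : |v i| ^ p ≤ ∑ k, |v k| ^ p :=
    Finset.single_le_sum (f := fun k => |v k| ^ p) (fun _ _ => by positivity) (Finset.mem_univ i)
  calc |v i| = (|v i| ^ p) ^ (1 / p) := by
        rw [← Real.rpow_mul (abs_nonneg _), mul_one_div_cancel hp.ne', Real.rpow_one]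
    _ ≤ pNorm p v := Real.rpow_le_rpow (by positivity) hi (by positivity)

lemma pNorm_le_mul_pNorm (hp : 0 < p) {K : ℝ} (hK : 0 ≤ K) {v w : ι → ℝ}
    (h : ∀ i, |v i| ≤ K * |w i|) : pNorm p v ≤ K * pNorm p w := by
  have hsum : ∑ i, |v i| ^ p ≤ K ^ p * ∑ i, |w i| ^ p := by
    rw [Finset.mul_sum]
    refine Finset.sum_le_sum fun i _ => ?_
    rw [← Real.mul_rpow hK (abs_nonneg _)]
    exact Real.rpow_le_rpow (abs_nonneg _) (h i) hp.le
  calc pNorm p v ≤ (K ^ p * ∑ i, |w i| ^ p) ^ (1 / p) :=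
        Real.rpow_le_rpow (sum_abs_rpow_nonneg p v) hsum (by positivity)
    _ = K * pNorm p w := by
        rw [Real.mul_rpow (by positivity) (sum_abs_rpow_nonneg p w), ← Real.rpow_mul hK,
          mul_one_div_cancel hp.ne', Real.rpow_one, pNorm]

lemma pNorm_anti (hp : 0 < p) (hpq : p ≤ q) (v : ι → ℝ) : pNorm q v ≤ pNorm p v := by
  have hq : 0 < q := hp.trans_le hpq
  set S := ∑ i, |v i| ^ p
  have hS : 0 ≤ S := sum_abs_rpow_nonneg p v
  have hqp : 1 + (q - p) / p = q / p := by field_simp; ring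
  -- uses `|v i| ≤ S ^ (1 / p)`
  have hterm : ∀ i, |v i| ^ q ≤ |v i| ^ p * S ^ ((q - p) / p) := by
    intro i
    have hi : |v i| ^ p ≤ S :=
      Finset.single_le_sum (f := fun i => |v i| ^ p) (fun _ _ => by positivity) (Finset.mem_univ i)
    have hpow : |v i| ^ (q - p) ≤ S ^ ((q - p) / p) := by
      rw [show |v i| ^ (q - p) = (|v i| ^ p) ^ ((q - p) / p) by
        rw [← Real.rpow_mul (abs_nonneg _)]; congr 1; field_simp]
      exact Real.rpow_le_rpow (by positivity) hi (div_nonneg (by linarith) hp.le)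
    calc |v i| ^ q = |v i| ^ p * |v i| ^ (q - p) := by
          rw [← Real.rpow_add' (abs_nonneg _) (by linarith)]; ring_nf
      _ ≤ |v i| ^ p * S ^ ((q - p) / p) := by gcongr
  have hsum : ∑ i, |v i| ^ q ≤ S ^ (q / p) :=
    calc ∑ i, |v i| ^ q ≤ ∑ i, |v i| ^ p * S ^ ((q - p) / p) := Finset.sum_le_sum fun i _ => hterm i
      _ = S ^ (q / p) := by
        rw [← Finset.sum_mul, ← hqp, Real.rpow_add' hS (by rw [hqp]; positivity), Real.rpow_one]
  calc pNorm q v ≤ (S ^ (q / p)) ^ (1 / q) :=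
        Real.rpow_le_rpow (sum_abs_rpow_nonneg q v) hsum (by positivity)
    _ = pNorm p v := by
        rw [← Real.rpow_mul hS, pNorm, div_mul_div_comm, mul_one, mul_comm, ← div_div,
          div_self hq.ne']

lemma pNorm_le_card_rpow_mul_pNorm (hp : 0 < p) (hpq : p ≤ q) (v : ι → ℝ) :
    pNorm p v ≤ (Fintype.card ι : ℝ) ^ (1 / p - 1 / q) * pNorm q v := by
  have hq : 0 < q := hp.trans_le hpq
  set N : ℝ := (Fintype.card ι : ℝ)
  have hX := sum_abs_rpow_nonneg p v
  have hpow : ∀ i, |(|v i| ^ p)| ^ (q / p) = |v i| ^ q := fun i => by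
    rw [abs_of_nonneg (by positivity), ← Real.rpow_mul (abs_nonneg _), mul_div_cancel₀ _ hp.ne']
  have hmean := Real.rpow_sum_le_const_mul_sum_rpow (s := Finset.univ)
    (f := fun i => |v i| ^ p) ((one_le_div hp).mpr hpq)
  simp only [hpow, Finset.card_univ] at hmean
  calc pNorm p v = ((∑ i, |(|v i| ^ p)|) ^ (q / p)) ^ (1 / q) := by
        simp only [abs_of_nonneg (Real.rpow_nonneg (abs_nonneg _) _)]
        rw [← Real.rpow_mul hX, pNorm]; congr 1; field_simp
    _ ≤ (N ^ (q / p - 1) * ∑ i, |v i| ^ q) ^ (1 / q) :=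
        Real.rpow_le_rpow (by positivity) hmean (by positivity)
    _ = N ^ (1 / p - 1 / q) * pNorm q v := by
        rw [Real.mul_rpow (by positivity) (sum_abs_rpow_nonneg q v),
          ← Real.rpow_mul (by positivity), pNorm]
        congr 2
        field_simp

end pNorm

lemma entryNorm_eq_pNorm {n m : ℕ} (p : ℝ) (M : Matrix (Fin n) (Fin m) ℝ) :
    entryNorm p M = pNorm p (fun x : Fin n × Fin m => M x.1 x.2) := by
  rw [entryNorm, pNorm, Fintype.sum_prod_type]

lemma entryNorm_nonneg {n m : ℕ} (p : ℝ) (M : Matrix (Fin n) (Fin m) ℝ) : 0 ≤ entryNorm p M := by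
  rw [entryNorm_eq_pNorm]; exact pNorm_nonneg _ _

lemma entryNorm_eq_pNorm_col {n m : ℕ} {p : ℝ} (hp : 0 < p) (M : Matrix (Fin n) (Fin m) ℝ) :
    entryNorm p M = pNorm p (fun j => pNorm p (M.col j)) := by
  rw [entryNorm, Finset.sum_comm, pNorm]
  congr 1
  refine Finset.sum_congr rfl fun j _ => ?_
  rw [abs_of_nonneg (pNorm_nonneg _ _), pNorm_rpow hp]
  rfl

lemma entryNorm_two {n m : ℕ} (X : Matrix (Fin n) (Fin m) ℝ) :
    entryNorm 2 X = √((Xᵀ * X).trace) := by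
  rw [entryNorm_eq_pNorm, pNorm_two]
  congr 1
  simp only [dotProduct, trace, diag, mul_apply, transpose_apply, Fintype.sum_prod_type]
  exact Finset.sum_comm

lemma dualNorm_le_lpNorm_two {n : ℕ} {p : ℝ} (hp : 1 ≤ p) (hp2 : p ≤ 2) (z : Fin n → ℝ) :
    dualNorm p z ≤ lpNorm 2 z := by
  rw [dualNorm]
  split_ifs with hp1
  · exact Real.iSup_le (fun i => abs_le_pNorm two_pos z i) (pNorm_nonneg _ _)
  · have h2q : 2 ≤ p / (p - 1) := by
      rw [le_div_iff₀ (by grind)]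
      linarith
    exact pNorm_anti two_pos h2q z

lemma col_mul {n d r : ℕ} (A : Matrix (Fin n) (Fin d) ℝ) (C : Matrix (Fin d) (Fin r) ℝ)
    (j : Fin r) : (A * C).col j = A *ᵥ (C *ᵥ Pi.single j 1) := by
  rw [mulVec_mulVec, mulVec_single_one]

lemma mulVec_injective_of_rank_eq {m n : Type*} [Fintype n] {C : Matrix m n ℝ}
    (hC : C.rank = Fintype.card n) : Function.Injective C.mulVec := by
  have hker := C.mulVecLin.finrank_range_add_finrank_ker
  rw [Module.finrank_fintype_fun_eq_card] at hker
  have : LinearMap.ker C.mulVecLin = ⊥ :=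
    Submodule.finrank_eq_zero.mp (by rw [← rank] at hker; omega)
  exact LinearMap.ker_eq_bot.mp this

section QuadraticForms

variable {m n k : Type*} [Fintype m] [Fintype n] [Fintype k]

lemma mulVec_dotProduct_mulVec (A : Matrix m n ℝ) (B : Matrix m k ℝ) (x : n → ℝ) (y : k → ℝ) :
    (A *ᵥ x) ⬝ᵥ (B *ᵥ y) = x ⬝ᵥ ((Aᵀ * B) *ᵥ y) := by
  rw [← mulVec_mulVec, dotProduct_mulVec x Aᵀ, vecMul_transpose]

lemma dotProduct_self_nonneg (v : n → ℝ) : 0 ≤ v ⬝ᵥ v :=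
  Finset.sum_nonneg fun i _ => mul_self_nonneg (v i)

lemma dotProduct_mulVec_le_of_posSemidef_sub {Q R : Matrix n n ℝ} (h : (Q - R).PosSemidef)
    (x : n → ℝ) : x ⬝ᵥ (R *ᵥ x) ≤ x ⬝ᵥ (Q *ᵥ x) := by
  have := h.dotProduct_mulVec_nonneg x
  rw [star_trivial, sub_mulVec, dotProduct_sub] at this
  linarith

lemma trace_mul_mul_transpose_le_of_posSemidef_sub {Q R : Matrix n n ℝ} (h : (Q - R).PosSemidef)
    (A : Matrix m n ℝ) : (A * R * Aᵀ).trace ≤ (A * Q * Aᵀ).trace := by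
  have := (h.mul_mul_conjTranspose_same A).trace_nonneg
  rw [conjTranspose_eq_transpose_of_trivial, Matrix.mul_sub, Matrix.sub_mul, trace_sub] at this
  linarith

lemma trace_le_card_of_transpose_eq_of_mul_self_eq [DecidableEq n] {Q : Matrix n n ℝ}
    (hsymm : Qᵀ = Q) (hidem : Q * Q = Q) : Q.trace ≤ Fintype.card n := by
  have hgram : (1 - Q)ᵀ * (1 - Q) = 1 - Q := by
    rw [transpose_sub, transpose_one, hsymm, Matrix.sub_mul, Matrix.mul_sub, Matrix.mul_sub, hidem]
    simp
  have := (posSemidef_conjTranspose_mul_self (1 - Q)).trace_nonneg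
  rw [conjTranspose_eq_transpose_of_trivial, hgram, trace_sub, trace_one] at this
  linarith

lemma mul_dotProduct_self_le_of_gram [DecidableEq n] {X : Matrix m n ℝ}
    (hX : Function.Injective X.mulVec) {c : ℝ}
    (h : ∀ y, c * ((X *ᵥ y) ⬝ᵥ (X *ᵥ y)) ≤ ((Xᵀ * X) *ᵥ y) ⬝ᵥ ((Xᵀ * X) *ᵥ y)) (z : n → ℝ) :
    c * (z ⬝ᵥ z) ≤ (X *ᵥ z) ⬝ᵥ (X *ᵥ z) := by
  set B := Xᵀ * X
  have hBsymm : Bᵀ = B := by simp [B]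
  have hB : Function.Injective B.mulVec := by
    intro u v huv
    apply hX
    rw [← sub_eq_zero, ← mulVec_sub, ← dotProduct_self_eq_zero, mulVec_dotProduct_mulVec,
      mulVec_sub, huv, sub_self, dotProduct_zero]
  obtain ⟨u, rfl⟩ := mulVec_surjective_iff_isUnit.mpr (mulVec_injective_iff_isUnit.mp hB) z
  -- Cauchy–Schwarz: `|Bu|² = ⟪Xu, XBu⟫ ≤ |Xu| |XBu|`
  have hBu : (B *ᵥ u) ⬝ᵥ (B *ᵥ u) = (X *ᵥ u) ⬝ᵥ (X *ᵥ (B *ᵥ u)) := by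
    rw [mulVec_dotProduct_mulVec, mulVec_dotProduct_mulVec, hBsymm, mulVec_mulVec]
  have hcs : ((B *ᵥ u) ⬝ᵥ (B *ᵥ u)) ^ 2 ≤
      ((X *ᵥ u) ⬝ᵥ (X *ᵥ u)) * ((X *ᵥ (B *ᵥ u)) ⬝ᵥ (X *ᵥ (B *ᵥ u))) := by
    rw [hBu]
    simpa only [dotProduct, sq] using
      Finset.sum_mul_sq_le_sq_mul_sq Finset.univ (X *ᵥ u) (X *ᵥ (B *ᵥ u))
  have hu := h u
  have hb := dotProduct_self_nonneg (X *ᵥ (B *ᵥ u))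
  rcases le_or_gt c 0 with hc | hc
  · nlinarith [dotProduct_self_nonneg (B *ᵥ u)]
  · by_contra! hlt
    have ha : 0 < (B *ᵥ u) ⬝ᵥ (B *ᵥ u) := by nlinarith
    nlinarith [mul_le_mul_of_nonneg_left hcs hc.le, mul_nonneg (sub_nonneg.2 hu) hb,
      mul_lt_mul_of_pos_left hlt ha]

end QuadraticForms

namespace IsMoorePenrose

variable {d : ℕ} {M P : Matrix (Fin d) (Fin d) ℝ}

lemma dotProduct_mulVec_eq_zero (h : IsMoorePenrose M P) {w : Fin d → ℝ} (hw : M *ᵥ w = 0) :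
    w ⬝ᵥ (P *ᵥ w) = 0 := by
  obtain ⟨-, hPMP, -, hPM⟩ := h
  calc w ⬝ᵥ (P *ᵥ w) = w ⬝ᵥ ((P * M) *ᵥ (P *ᵥ w)) := by rw [mulVec_mulVec, hPMP]
    _ = ((P * M)ᵀ *ᵥ w) ⬝ᵥ (P *ᵥ w) := by rw [dotProduct_mulVec, mulVec_transpose]
    _ = 0 := by rw [hPM, ← mulVec_mulVec, hw, mulVec_zero, zero_dotProduct]

lemma mulVec_dotProduct_mulVec_mulVec (h : IsMoorePenrose M P) (hM : Mᵀ = M) (v : Fin d → ℝ) :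
    (M *ᵥ v) ⬝ᵥ (P *ᵥ (M *ᵥ v)) = v ⬝ᵥ (M *ᵥ v) := by
  rw [mulVec_mulVec, mulVec_dotProduct_mulVec, hM, ← Matrix.mul_assoc, h.1]

lemma trace_mul_le (h : IsMoorePenrose M P) : (M * P).trace ≤ d := by
  simpa using trace_le_card_of_transpose_eq_of_mul_self_eq h.2.2.1
    (by rw [← Matrix.mul_assoc, h.1])

end IsMoorePenrose

section ApproximatePseudoinverse

variable {nt d r : ℕ} {At : Matrix (Fin nt) (Fin d) ℝ} {Pt : Matrix (Fin d) (Fin d) ℝ}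
  {C : Matrix (Fin d) (Fin r) ℝ}

lemma mulVec_mul_injective (hPt : IsMoorePenrose (Atᵀ * At) Pt) (hC : C.rank = r) {b : ℝ}
    (h₂ : (b • Pt - C * Cᵀ).PosSemidef) : Function.Injective (At * C).mulVec := by
  suffices ∀ z, (At * C) *ᵥ z = 0 → z = 0 from
    fun z₁ z₂ h => sub_eq_zero.mp (this _ (by rw [mulVec_sub, h, sub_self]))
  intro z hz
  set w := C *ᵥ z
  have hAw : At *ᵥ w = 0 := by rw [mulVec_mulVec, hz]
  have hMw : (Atᵀ * At) *ᵥ w = 0 := by rw [← mulVec_mulVec, hAw, mulVec_zero]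
  have hCw : w ⬝ᵥ ((C * Cᵀ) *ᵥ w) ≤ 0 := by
    simpa [smul_mulVec, hPt.dotProduct_mulVec_eq_zero hMw] using
      dotProduct_mulVec_le_of_posSemidef_sub h₂ w
  have hCtw : Cᵀ *ᵥ w = 0 := by
    rw [← transpose_transpose C, ← mulVec_dotProduct_mulVec, transpose_transpose] at hCw
    rw [← dotProduct_self_eq_zero]
    exact le_antisymm hCw (dotProduct_self_nonneg _)
  have hw : w = 0 := by
    rw [← dotProduct_self_eq_zero, mulVec_dotProduct_mulVec, ← mulVec_mulVec, hCtw, dotProduct_zero]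
  exact mulVec_injective_of_rank_eq (by simpa using hC) (by rw [mulVec_zero]; exact hw)

lemma mul_mulVec_dotProduct_le_gram (hPt : IsMoorePenrose (Atᵀ * At) Pt) {a : ℝ}
    (h₁ : (C * Cᵀ - a • Pt).PosSemidef) (y : Fin r → ℝ) :
    a * (((At * C) *ᵥ y) ⬝ᵥ ((At * C) *ᵥ y)) ≤
      (((At * C)ᵀ * (At * C)) *ᵥ y) ⬝ᵥ (((At * C)ᵀ * (At * C)) *ᵥ y) := by
  set M := Atᵀ * At
  set x := M *ᵥ (C *ᵥ y)
  have hX : ((At * C) *ᵥ y) ⬝ᵥ ((At * C) *ᵥ y) = x ⬝ᵥ (Pt *ᵥ x) := by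
    rw [hPt.mulVec_dotProduct_mulVec_mulVec (by simp [M]), ← mulVec_mulVec,
      mulVec_dotProduct_mulVec]
  have hB : (((At * C)ᵀ * (At * C)) *ᵥ y) ⬝ᵥ (((At * C)ᵀ * (At * C)) *ᵥ y) =
      x ⬝ᵥ ((C * Cᵀ) *ᵥ x) := by
    rw [show (At * C)ᵀ * (At * C) = Cᵀ * M * C by simp [M, Matrix.mul_assoc],
      ← mulVec_mulVec, ← mulVec_mulVec, mulVec_dotProduct_mulVec, transpose_transpose]
  rw [hX, hB]
  simpa [smul_mulVec] using dotProduct_mulVec_le_of_posSemidef_sub h₁ x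

lemma mul_dotProduct_self_le (hPt : IsMoorePenrose (Atᵀ * At) Pt) (hC : C.rank = r) {a b : ℝ}
    (h₁ : (C * Cᵀ - a • Pt).PosSemidef) (h₂ : (b • Pt - C * Cᵀ).PosSemidef) (z : Fin r → ℝ) :
    a * (z ⬝ᵥ z) ≤ ((At * C) *ᵥ z) ⬝ᵥ ((At * C) *ᵥ z) :=
  mul_dotProduct_self_le_of_gram (mulVec_mul_injective hPt hC h₂)
    (mul_mulVec_dotProduct_le_gram hPt h₁) z

lemma trace_transpose_mul_le (hPt : IsMoorePenrose (Atᵀ * At) Pt) {b : ℝ} (hb : 0 ≤ b)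
    (h₂ : (b • Pt - C * Cᵀ).PosSemidef) : ((At * C)ᵀ * (At * C)).trace ≤ b * d :=
  calc ((At * C)ᵀ * (At * C)).trace = (At * (C * Cᵀ) * Atᵀ).trace := by
        rw [trace_mul_comm, transpose_mul]; simp only [Matrix.mul_assoc]
    _ ≤ (At * (b • Pt) * Atᵀ).trace := trace_mul_mul_transpose_le_of_posSemidef_sub h₂ At
    _ = b * (Atᵀ * At * Pt).trace := by
        rw [Matrix.mul_smul, Matrix.smul_mul, trace_smul, smul_eq_mul, trace_mul_comm,
          Matrix.mul_assoc]
    _ ≤ b * d := mul_le_mul_of_nonneg_left hPt.trace_mul_le hb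

end ApproximatePseudoinverse

section NormBounds

variable {p p' : ℝ} {n nt d r : ℕ} {A : Matrix (Fin n) (Fin d) ℝ}
  {At : Matrix (Fin nt) (Fin d) ℝ} {C : Matrix (Fin d) (Fin r) ℝ}

lemma dualNorm_le_mul_lpNorm (hp : 1 ≤ p) (hpp' : p ≤ p') (hp'2 : p' ≤ 2)
    (happrox : ∀ x, lpNorm p' (At *ᵥ x) ≤ 3 / 2 * lpNorm p' (A *ᵥ x))
    (hgram : ∀ z, 1 / 2 * (z ⬝ᵥ z) ≤ ((At * C) *ᵥ z) ⬝ᵥ ((At * C) *ᵥ z)) (z : Fin r → ℝ) :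
    dualNorm p z ≤ 3 * lpNorm p ((A * C) *ᵥ z) := by
  have hp0 : 0 < p := by linarith
  have hsqrt2 : √2 ≤ 2 := by
    rw [Real.sqrt_le_left (by norm_num)]; norm_num
  calc dualNorm p z ≤ lpNorm 2 z := dualNorm_le_lpNorm_two hp (hpp'.trans hp'2) z
    _ = √(z ⬝ᵥ z) := pNorm_two z
    _ ≤ √(2 * (((At * C) *ᵥ z) ⬝ᵥ ((At * C) *ᵥ z))) := Real.sqrt_le_sqrt (by linarith [hgram z])
    _ = √2 * lpNorm 2 ((At * C) *ᵥ z) := by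
        rw [Real.sqrt_mul zero_le_two, lpNorm_eq_pNorm, pNorm_two]
    _ ≤ √2 * lpNorm p' ((At * C) *ᵥ z) := by gcongr; exact pNorm_anti (by linarith) hp'2 _
    _ ≤ √2 * (3 / 2 * lpNorm p' ((A * C) *ᵥ z)) := by
        gcongr; simpa only [mulVec_mulVec] using happrox (C *ᵥ z)
    _ ≤ 2 * (3 / 2 * lpNorm p ((A * C) *ᵥ z)) :=
        mul_le_mul hsqrt2 (by gcongr; exact pNorm_anti hp0 hpp' _)
          (mul_nonneg (by norm_num) (pNorm_nonneg _ _)) zero_le_two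
    _ = 3 * lpNorm p ((A * C) *ᵥ z) := by ring

lemma entryNorm_le (hp : 0 < p) (hpp' : p ≤ p') (hp'2 : p' ≤ 2) (hrd : r ≤ d)
    (happrox : ∀ x, 1 / 2 * lpNorm p' (A *ᵥ x) ≤ lpNorm p' (At *ᵥ x))
    (htrace : ((At * C)ᵀ * (At * C)).trace ≤ 2 * d) :
    entryNorm p (A * C) ≤
      2 * √2 * ((n : ℝ) * d) ^ (1 / p - 1 / p') * ((nt : ℝ) * d) ^ (1 / p' - 1 / 2) *
        (d : ℝ) ^ ((1 : ℝ) / 2) := by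
  have hp' : 0 < p' := hp.trans_le hpp'
  have ha : 0 ≤ 1 / p - 1 / p' := sub_nonneg.mpr (one_div_le_one_div_of_le hp hpp')
  have hb : 0 ≤ 1 / p' - 1 / 2 := sub_nonneg.mpr (one_div_le_one_div_of_le hp' hp'2)
  have hrd' : (r : ℝ) ≤ d := by exact_mod_cast hrd
  have hcol : entryNorm p' (A * C) ≤ 2 * entryNorm p' (At * C) := by
    rw [entryNorm_eq_pNorm_col hp', entryNorm_eq_pNorm_col hp']
    refine pNorm_le_mul_pNorm hp' zero_le_two fun j => ?_
    rw [abs_of_nonneg (pNorm_nonneg _ _), abs_of_nonneg (pNorm_nonneg _ _), col_mul, col_mul]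
    have := happrox (C *ᵥ Pi.single j 1)
    rw [lpNorm_eq_pNorm, lpNorm_eq_pNorm] at this
    linarith
  have hfrob : entryNorm 2 (At * C) ≤ √2 * (d : ℝ) ^ ((1 : ℝ) / 2) := by
    rw [entryNorm_two, ← Real.sqrt_eq_rpow, ← Real.sqrt_mul zero_le_two]
    exact Real.sqrt_le_sqrt htrace
  calc entryNorm p (A * C) ≤ ((n : ℝ) * r) ^ (1 / p - 1 / p') * entryNorm p' (A * C) := by
        simpa [entryNorm_eq_pNorm] using pNorm_le_card_rpow_mul_pNorm hp hpp'
          (fun x : Fin n × Fin r => (A * C) x.1 x.2)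
    _ ≤ ((n : ℝ) * r) ^ (1 / p - 1 / p') * (2 * (((nt : ℝ) * r) ^ (1 / p' - 1 / 2) *
          entryNorm 2 (At * C))) := by
        gcongr
        refine hcol.trans ?_
        gcongr
        simpa [entryNorm_eq_pNorm] using pNorm_le_card_rpow_mul_pNorm hp' hp'2
          (fun x : Fin nt × Fin r => (At * C) x.1 x.2)
    _ ≤ ((n : ℝ) * d) ^ (1 / p - 1 / p') * (2 * (((nt : ℝ) * d) ^ (1 / p' - 1 / 2) *
          (√2 * (d : ℝ) ^ ((1 : ℝ) / 2)))) := by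
        have := entryNorm_nonneg 2 (At * C)
        gcongr
    _ = _ := by ring

end NormBounds

theorem basis_from_lp'_approx_general (p p' : ℝ) (hp : 1 ≤ p) (hpp' : p ≤ p') (hp'2 : p' ≤ 2)
    (n nt d r : ℕ) (A : Matrix (Fin n) (Fin d) ℝ)
    (At : Matrix (Fin nt) (Fin d) ℝ)
    (happrox : ∀ x : Fin d → ℝ,
      (1 / 2 : ℝ) * lpNorm p' (A.mulVec x) ≤ lpNorm p' (At.mulVec x) ∧
      lpNorm p' (At.mulVec x) ≤ (3 / 2 : ℝ) * lpNorm p' (A.mulVec x))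
    (Pt : Matrix (Fin d) (Fin d) ℝ) (hPt : IsMoorePenrose (Atᵀ * At) Pt)
    (C : Matrix (Fin d) (Fin r) ℝ) (hC : C.rank = r)
    (h₁ : (C * Cᵀ - (1 / 2 : ℝ) • Pt).PosSemidef)
    (h₂ : ((3 / 2 : ℝ) • Pt - C * Cᵀ).PosSemidef) :
    entryNorm p (A * C) ≤
      2 * Real.sqrt 2 * ((n : ℝ) * d) ^ (1 / p - 1 / p') * ((nt : ℝ) * d) ^ (1 / p' - 1 / 2) *
        (d : ℝ) ^ ((1 : ℝ) / 2) ∧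
    (∀ z : Fin r → ℝ, dualNorm p z ≤ 3 * lpNorm p ((A * C).mulVec z)) ∧
    (∃ α β : ℝ,
      entryNorm p (A * C) ≤ α ∧
      (∀ z : Fin r → ℝ, dualNorm p z ≤ β * lpNorm p ((A * C).mulVec z)) ∧
      α * β ≤ 6 * Real.sqrt 2 * (n : ℝ) ^ (1 / p - 1 / p') * (nt : ℝ) ^ (1 / p' - 1 / 2) *
        (d : ℝ) ^ (1 / p)) := by
  have hp0 : 0 < p := by linarith
  have hp' : 0 < p' := by linarith
  have htrace : ((At * C)ᵀ * (At * C)).trace ≤ 2 * d :=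
    (trace_transpose_mul_le hPt (by norm_num) h₂).trans (by gcongr; norm_num)
  have hupper := entryNorm_le hp0 hpp' hp'2 (hC ▸ C.rank_le_height)
    (fun x => (happrox x).1) htrace
  have hlower := dualNorm_le_mul_lpNorm hp hpp' hp'2 (fun x => (happrox x).2)
    (mul_dotProduct_self_le hPt hC h₁ h₂)
  refine ⟨hupper, hlower, _, 3, hupper, hlower, le_of_eq ?_⟩
  have hd : (d : ℝ) ^ (1 / p - 1 / p') * ((d : ℝ) ^ (1 / p' - 1 / 2) * (d : ℝ) ^ ((1 : ℝ) / 2)) =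
      (d : ℝ) ^ (1 / p) := by
    rw [← Real.rpow_add' d.cast_nonneg (by rw [sub_add_cancel]; positivity),
      ← Real.rpow_add' d.cast_nonneg (by rw [sub_add_cancel, sub_add_cancel]; positivity)]
    ring_nf
  rw [Real.mul_rpow n.cast_nonneg d.cast_nonneg, Real.mul_rpow nt.cast_nonneg d.cast_nonneg, ← hd]
  ring

/-- A well-conditioned ℓ_p basis from an ℓ_{p'}-approximation: paper's Lemma 5.11 with
explicit constants. -/
theorem basis_from_lp'_approx (p p' : ℝ) (hp : 1 ≤ p) (hpp' : p ≤ p') (hp'2 : p' ≤ 2)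
    (n nt d r : ℕ) (A : Matrix (Fin n) (Fin d) ℝ) (hrank : A.rank = r)
    (At : Matrix (Fin nt) (Fin d) ℝ)
    (happrox : ∀ x : Fin d → ℝ,
      (1 / 2 : ℝ) * lpNorm p' (A.mulVec x) ≤ lpNorm p' (At.mulVec x) ∧
      lpNorm p' (At.mulVec x) ≤ (3 / 2 : ℝ) * lpNorm p' (A.mulVec x))
    (Pt : Matrix (Fin d) (Fin d) ℝ) (hPt : IsMoorePenrose (Atᵀ * At) Pt)
    (C : Matrix (Fin d) (Fin r) ℝ) (hC : C.rank = r)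
    (h₁ : (C * Cᵀ - (1 / 2 : ℝ) • Pt).PosSemidef)
    (h₂ : ((3 / 2 : ℝ) • Pt - C * Cᵀ).PosSemidef) :
    entryNorm p (A * C) ≤
      2 * Real.sqrt 2 * ((n : ℝ) * d) ^ (1 / p - 1 / p') * ((nt : ℝ) * d) ^ (1 / p' - 1 / 2) *
        (d : ℝ) ^ ((1 : ℝ) / 2) ∧
    (∀ z : Fin r → ℝ, dualNorm p z ≤ 3 * lpNorm p ((A * C).mulVec z)) ∧
    (∃ α β : ℝ,
      entryNorm p (A * C) ≤ α ∧
      (∀ z : Fin r → ℝ, dualNorm p z ≤ β * lpNorm p ((A * C).mulVec z)) ∧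
      α * β ≤ 6 * Real.sqrt 2 * (n : ℝ) ^ (1 / p - 1 / p') * (nt : ℝ) ^ (1 / p' - 1 / 2) *
        (d : ℝ) ^ (1 / p)) :=
  basis_from_lp'_approx_general p p' hp hpp' hp'2 n nt d r A At happrox Pt hPt C hC h₁ h₂
end
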